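/- arXiv:1904.05339 — 2 statements merged into one kernel-verified Lean document; each statement's English description precedes it below -/
import Mathlib

section
/- For complex numbers z₁, z₂ and real p ≥ 2, with f(z) = |z|^{p-2} z, one has |f(z₁) - f(z₂)| ≤ C(p) (|z₁|^{p-2} + |z₂|^{p-2}) |z₁ - z₂| for some constant C(p) depending only on p. -/
/-!
Write `a = ‖x‖ ≥ b = ‖y‖` and `q = p - 2`. Then `f x - f y = a^q (x - y) + (a^q - b^q) y`,
and the only nontrivial term is `b (a^q - b^q)`. It is at most `a^(q+1) - b^(q+1)`, which
Bernoulli's inequality (convexity of `t ↦ t^(q+1)`) bounds by `(q+1) a^q (a - b) ≤ (q+1) a^q ‖x - y‖`.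
This gives the constant `C(p) = p`.
-/

theorem Real.rpow_sub_rpow_le_mul_rpow_sub_one {r a b : ℝ} (hr : 1 ≤ r) (hb : 0 ≤ b) (hba : b ≤ a) :
    a ^ r - b ^ r ≤ r * a ^ (r - 1) * (a - b) := by
  obtain rfl | ha := (hb.trans hba).eq_or_lt
  · obtain rfl : b = 0 := le_antisymm hba hb
    simp
  have hbern :=
    one_add_mul_self_le_rpow_one_add (s := b / a - 1) (by linarith [div_nonneg hb ha.le]) hr
  rw [add_sub_cancel, Real.div_rpow hb ha.le, le_div_iff₀ (Real.rpow_pos_of_pos ha r)] at hbern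
  have hsplit : a ^ r = a ^ (r - 1) * a := by rw [← Real.rpow_add_one ha.ne', sub_add_cancel]
  have hexpand : (1 + r * (b / a - 1)) * a ^ r = a ^ r - r * a ^ (r - 1) * (a - b) := by
    rw [hsplit]; field_simp; ring
  linarith

theorem Real.mul_rpow_sub_rpow_le {q a b : ℝ} (hq : 0 ≤ q) (hb : 0 ≤ b) (hba : b ≤ a) :
    b * (a ^ q - b ^ q) ≤ (q + 1) * a ^ q * (a - b) := by
  have ha : 0 ≤ a := hb.trans hba
  have key := Real.rpow_sub_rpow_le_mul_rpow_sub_one (by linarith : 1 ≤ q + 1) hb hba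
  rw [add_sub_cancel_right, Real.rpow_add_one' ha (by linarith),
    Real.rpow_add_one' hb (by linarith)] at key
  nlinarith [mul_le_mul_of_nonneg_right hba (Real.rpow_nonneg ha q)]

variable {E : Type*} [SeminormedAddCommGroup E] [NormedSpace ℝ E]

theorem norm_rpow_smul_sub_rpow_smul_le_of_norm_le {q : ℝ} (hq : 0 ≤ q) {x y : E} (hyx : ‖y‖ ≤ ‖x‖) :
    ‖‖x‖ ^ q • x - ‖y‖ ^ q • y‖ ≤ (q + 2) * ‖x‖ ^ q * ‖x - y‖ := by
  have hpow : ‖y‖ ^ q ≤ ‖x‖ ^ q := Real.rpow_le_rpow (norm_nonneg y) hyx hq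
  have hsplit : ‖x‖ ^ q • x - ‖y‖ ^ q • y = ‖x‖ ^ q • (x - y) + (‖x‖ ^ q - ‖y‖ ^ q) • y := by
    rw [smul_sub, sub_smul]; abel
  have hdiff : ‖y‖ * (‖x‖ ^ q - ‖y‖ ^ q) ≤ (q + 1) * ‖x‖ ^ q * ‖x - y‖ :=
    (Real.mul_rpow_sub_rpow_le hq (norm_nonneg y) hyx).trans
      (mul_le_mul_of_nonneg_left (norm_sub_norm_le x y) (by positivity))
  calc ‖‖x‖ ^ q • x - ‖y‖ ^ q • y‖
      ≤ ‖x‖ ^ q * ‖x - y‖ + (‖x‖ ^ q - ‖y‖ ^ q) * ‖y‖ := by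
        rw [hsplit]
        refine (norm_add_le _ _).trans_eq ?_
        rw [norm_smul, norm_smul, Real.norm_of_nonneg (by positivity),
          Real.norm_of_nonneg (sub_nonneg.2 hpow)]
    _ ≤ (q + 2) * ‖x‖ ^ q * ‖x - y‖ := by linarith

theorem norm_rpow_smul_sub_rpow_smul_le {q : ℝ} (hq : 0 ≤ q) (x y : E) :
    ‖‖x‖ ^ q • x - ‖y‖ ^ q • y‖ ≤ (q + 2) * (‖x‖ ^ q + ‖y‖ ^ q) * ‖x - y‖ := by
  rcases le_total ‖y‖ ‖x‖ with hyx | hxy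
  · refine (norm_rpow_smul_sub_rpow_smul_le_of_norm_le hq hyx).trans ?_
    gcongr
    exact le_add_of_nonneg_right (by positivity)
  · rw [norm_sub_rev, norm_sub_rev x]
    refine (norm_rpow_smul_sub_rpow_smul_le_of_norm_le hq hxy).trans ?_
    gcongr
    exact le_add_of_nonneg_left (by positivity)

/-- For complex numbers `z₁, z₂` and real `p ≥ 2`, with `f z = |z|^(p-2) z`, one has
`|f z₁ - f z₂| ≤ C(p) (|z₁|^(p-2) + |z₂|^(p-2)) |z₁ - z₂|`. -/
theorem stmt0 (p : ℝ) (hp : 2 ≤ p) :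
    ∃ C : ℝ, 0 < C ∧ ∀ z₁ z₂ : ℂ,
      ‖((‖z₁‖ ^ (p - 2) : ℝ) : ℂ) * z₁
          - ((‖z₂‖ ^ (p - 2) : ℝ) : ℂ) * z₂‖
        ≤ C * (‖z₁‖ ^ (p - 2) + ‖z₂‖ ^ (p - 2)) * ‖z₁ - z₂‖ := by
  refine ⟨p, by linarith, fun z₁ z₂ => ?_⟩
  simpa only [← Complex.real_smul, sub_add_cancel] using
    norm_rpow_smul_sub_rpow_smul_le (sub_nonneg.2 hp) z₁ z₂
end

section
/- Radial Sobolev (Strauss) inequality: there exists C > 0 such that for every radially symmetric u ∈ H¹(ℝ^N), sup_{x ∈ ℝ^N} |x|^{(N-1)/2} |u(x)| ≤ C ‖u‖_{L²(ℝ^N)}^{1/2} ‖∇u‖_{L²(ℝ^N)}^{1/2}. -/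
open MeasureTheory

noncomputable section

open Set Metric MeasureTheory.Measure
open scoped ENNReal


lemma lintegral_polar {E : Type*} [NormedAddCommGroup E] [NormedSpace ℝ E] [MeasurableSpace E]
    [BorelSpace E] [Nontrivial E] [FiniteDimensional ℝ E] (μ : Measure E) [μ.IsAddHaarMeasure]
    (f : ℝ → ℝ≥0∞) (hf : Measurable f) :
    ∫⁻ x, f ‖x‖ ∂μ
      = (Module.finrank ℝ E) * μ (ball 0 1)
          * ∫⁻ y in Ioi (0 : ℝ), ENNReal.ofReal (y ^ (Module.finrank ℝ E - 1)) * f y := by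
  have h1 : ∫⁻ x, f ‖x‖ ∂μ = ∫⁻ x : ({(0)}ᶜ : Set E), f ‖x.1‖ ∂(μ.comap (↑)) := by
    rw [lintegral_subtype_comap (measurableSet_singleton (0:E)).compl fun x ↦ f ‖x‖,
      restrict_compl_singleton]
  have hfm : Measurable (fun z : sphere (0:E) 1 × Ioi (0:ℝ) => f z.2.1) :=
    hf.comp (measurable_subtype_coe.comp measurable_snd)
  have h2 := (μ.measurePreserving_homeomorphUnitSphereProd).lintegral_comp
    (f := fun z : sphere (0:E) 1 × Ioi (0:ℝ) => f z.2.1) hfm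
  have h2'' : ∫⁻ a : ({(0)}ᶜ : Set E),
      (fun z : sphere (0:E) 1 × Ioi (0:ℝ) => f z.2.1) ((homeomorphUnitSphereProd E) a)
        ∂(μ.comap (↑)) = ∫⁻ x : ({(0)}ᶜ : Set E), f ‖x.1‖ ∂(μ.comap (↑)) :=
    lintegral_congr fun a => by simp [homeomorphUnitSphereProd]
  have h3 : ∫⁻ z : sphere (0:E) 1 × Ioi (0:ℝ), f z.2.1
          ∂(μ.toSphere.prod (volumeIoiPow (Module.finrank ℝ E - 1)))
      = μ.toSphere univ * ∫⁻ y : Ioi (0:ℝ), f y.1 ∂(volumeIoiPow (Module.finrank ℝ E - 1)) := by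
    rw [lintegral_prod _ hfm.aemeasurable]
    simp [lintegral_const, mul_comm]
  have h4 : ∫⁻ y : Ioi (0:ℝ), f y.1 ∂(volumeIoiPow (Module.finrank ℝ E - 1))
      = ∫⁻ y in Ioi (0:ℝ), ENNReal.ofReal (y ^ (Module.finrank ℝ E - 1)) * f y := by
    rw [volumeIoiPow, lintegral_withDensity_eq_lintegral_mul _
      ((measurable_subtype_coe.pow_const _).ennreal_ofReal)
      (show Measurable fun y : Ioi (0:ℝ) => f y.1 from hf.comp measurable_subtype_coe)]
    rw [← lintegral_subtype_comap measurableSet_Ioi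
      (fun y : ℝ => ENNReal.ofReal (y ^ (Module.finrank ℝ E - 1)) * f y)]
    rfl
  rw [h1, ← h2'', h2, h3, h4, μ.toSphere_apply_univ, mul_assoc]

lemma fderiv_norm_radial {E : Type*} [NormedAddCommGroup E] [InnerProductSpace ℝ E]
    [CompleteSpace E] (u : E → ℂ) (hu : Differentiable ℝ u)
    (hrad : ∀ x y : E, ‖x‖ = ‖y‖ → u x = u y) :
    ∀ x y : E, ‖x‖ = ‖y‖ → ‖fderiv ℝ u x‖ = ‖fderiv ℝ u y‖ := by
  have key : ∀ x y : E, ‖x‖ = ‖y‖ → ‖fderiv ℝ u x‖ ≤ ‖fderiv ℝ u y‖ := by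
    intro x y hxy
    set A : E ≃ₗᵢ[ℝ] E := (Submodule.reflection (ℝ ∙ (x - y))ᗮ) with hA
    have hAx : A x = y := Submodule.reflection_sub hxy
    set B : E →L[ℝ] E := A.toLinearIsometry.toContinuousLinearMap with hBdef
    have hcomp : u ∘ ⇑A = u := funext fun z => hrad _ _ (A.norm_map z)
    have hD : HasFDerivAt (u ∘ ⇑A) ((fderiv ℝ u y).comp B) x := by
      have h1 : HasFDerivAt (⇑A) B x := B.hasFDerivAt
      have h2 : HasFDerivAt u (fderiv ℝ u y) (A x) := by
        rw [hAx]; exact (hu y).hasFDerivAt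
      exact h2.comp x h1
    rw [hcomp] at hD
    rw [hD.fderiv]; exact (ContinuousLinearMap.opNorm_comp_linearIsometryEquiv (fderiv ℝ u y) A).le
  exact fun x y h => le_antisymm (key x y h) (key y x h.symm)

set_option maxHeartbeats 2000000 in
/-- Radial Sobolev (Strauss) inequality: there exists `C > 0` such that for every radially
symmetric `u ∈ H¹(ℝ^N)` (continuous representative),
`|x|^{(N-1)/2} |u(x)| ≤ C ‖u‖_{L²}^{1/2} ‖∇u‖_{L²}^{1/2}` for all `x`. -/
theorem stmt7 (N : ℕ) (hN : 2 ≤ N) :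
    ∃ C : ℝ, 0 < C ∧ ∀ u : EuclideanSpace ℝ (Fin N) → ℂ,
      Continuous u → Differentiable ℝ u →
      MemLp u 2 → MemLp (fun x => ‖fderiv ℝ u x‖) 2 →
      (∀ x y : EuclideanSpace ℝ (Fin N), ‖x‖ = ‖y‖ → u x = u y) →
      ∀ x : EuclideanSpace ℝ (Fin N),
        ‖x‖ ^ (((N : ℝ) - 1) / 2) * ‖u x‖
          ≤ C * (∫ y, ‖u y‖ ^ 2) ^ ((1 : ℝ) / 4) * (∫ y, ‖fderiv ℝ u y‖ ^ 2) ^ ((1 : ℝ) / 4) := by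
  have hN0 : 0 < N := by omega
  haveI : Nontrivial (EuclideanSpace ℝ (Fin N)) := by
    refine nontrivial_of_ne (EuclideanSpace.single ⟨0, hN0⟩ (1:ℝ)) 0 ?_
    intro hcon
    have := congrArg (fun v => v ⟨0, hN0⟩) hcon
    simp [EuclideanSpace.single_apply] at this
  have hdim : Module.finrank ℝ (EuclideanSpace ℝ (Fin N)) = N := finrank_euclideanSpace_fin
  set c : ℝ := N * (volume (ball (0 : EuclideanSpace ℝ (Fin N)) 1)).toReal with hcdef
  have hvol_pos : 0 < (volume (ball (0 : EuclideanSpace ℝ (Fin N)) 1)).toReal :=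
    ENNReal.toReal_pos (measure_ball_pos volume 0 one_pos).ne' measure_ball_lt_top.ne
  have hc : 0 < c := by positivity
  clear_value c
  refine ⟨Real.sqrt (2 / c), Real.sqrt_pos.mpr (by positivity), ?_⟩
  intro u hu_cont hu_diff hu2 hd2 hrad x
  -- the unit vector and the radial profile
  set e : EuclideanSpace ℝ (Fin N) := EuclideanSpace.single ⟨0, hN0⟩ (1:ℝ) with he_def
  have he : ‖e‖ = 1 := by rw [he_def, EuclideanSpace.norm_single]; norm_num
  set g : ℝ → ℂ := fun s => u (s • e) with hg_def
  have hgx : ∀ z : EuclideanSpace ℝ (Fin N), u z = g ‖z‖ := by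
    intro z
    refine hrad _ _ ?_
    rw [norm_smul, Real.norm_eq_abs, abs_of_nonneg (norm_nonneg z), he, mul_one]
  have hg_cont : Continuous g := hu_cont.comp (continuous_id.smul continuous_const)
  set h : ℝ → ℝ := fun s => ‖fderiv ℝ u (s • e)‖ with hh_def
  have hradD : ∀ z : EuclideanSpace ℝ (Fin N), ‖fderiv ℝ u z‖ = h ‖z‖ := by
    intro z
    refine fderiv_norm_radial u hu_diff hrad _ _ ?_
    rw [norm_smul, Real.norm_eq_abs, abs_of_nonneg (norm_nonneg z), he, mul_one]
  have hsmul_cont : Continuous (fun s : ℝ => s • e) := continuous_id.smul continuous_const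
  have hh_meas : Measurable h := (measurable_fderiv ℝ u).norm.comp hsmul_cont.measurable
  -- derivative of the profile
  set g' : ℝ → ℂ := fun s => fderiv ℝ u (s • e) e with hg'_def
  have hg'_meas : Measurable g' :=
    (measurable_fderiv_apply_const ℝ u e).comp hsmul_cont.measurable
  have hg' : ∀ s : ℝ, HasDerivAt g (g' s) s := by
    intro s
    have h1 : HasDerivAt (fun t : ℝ => t • e) e s := by
      simpa using (hasDerivAt_id s).smul_const e
    exact ((hu_diff (s • e)).hasFDerivAt).comp_hasDerivAt s h1
  have hg'_le : ∀ s : ℝ, ‖g' s‖ ≤ h s := by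
    intro s
    calc ‖g' s‖ ≤ ‖fderiv ℝ u (s • e)‖ * ‖e‖ := (fderiv ℝ u (s • e)).le_opNorm e
    _ = h s := by rw [he, mul_one]
  -- pointwise square function and its derivative
  set φ : ℝ → ℝ := fun s => ‖g s‖ ^ 2 with hφ_def
  set D : ℝ → ℝ := fun s => 2 * (inner ℝ (g s) (g' s) : ℝ) with hD_def
  have hφ_cont : Continuous φ := (hg_cont.norm.pow 2)
  have hφ_nonneg : ∀ s, 0 ≤ φ s := fun s => by positivity
  have hφ' : ∀ s : ℝ, HasDerivAt φ (D s) s := by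
    intro s
    have h1 := (hg' s).inner ℝ (hg' s)
    have h2 : (fun t => (inner ℝ (g t) (g t) : ℝ)) = φ := by
      funext t; rw [real_inner_self_eq_norm_sq]
    rw [h2] at h1
    have h3 : (inner ℝ (g s) (g' s) : ℝ) + (inner ℝ (g' s) (g s) : ℝ) = D s := by
      have hcomm := real_inner_comm (g' s) (g s)
      show _ = 2 * (inner ℝ (g s) (g' s) : ℝ)
      linarith
    rwa [h3] at h1
  have hD_meas : Measurable D := by
    apply Measurable.const_mul
    exact Measurable.inner (𝕜 := ℝ) hg_cont.measurable hg'_meas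
  have hD_le : ∀ s : ℝ, |D s| ≤ 2 * (‖g s‖ * h s) := by
    intro s
    rw [hD_def, abs_mul, abs_two]
    refine mul_le_mul_of_nonneg_left ?_ (by norm_num)
    exact (abs_real_inner_le_norm _ _).trans
      (mul_le_mul_of_nonneg_left (hg'_le s) (norm_nonneg _))
  -- weighted profiles
  set F₁ : ℝ → ℝ := fun s => s ^ (N - 1) * φ s with hF₁_def
  set F₂ : ℝ → ℝ := fun s => s ^ (N - 1) * (h s) ^ 2 with hF₂_def
  have hF₁_meas : Measurable F₁ := (measurable_id.pow_const _).mul hφ_cont.measurable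
  have hF₂_meas : Measurable F₂ := (measurable_id.pow_const _).mul (hh_meas.pow_const 2)
  have hF₁_nonneg : ∀ s ∈ Ioi (0:ℝ), 0 ≤ F₁ s := fun s hs => by
    have : (0:ℝ) ≤ s := le_of_lt hs; positivity
  have hF₂_nonneg : ∀ s ∈ Ioi (0:ℝ), 0 ≤ F₂ s := fun s hs => by
    have : (0:ℝ) ≤ s := le_of_lt hs; positivity
  -- integrability of weighted profiles via polar coordinates
  have hcoef_ne_zero : ((N : ℝ≥0∞) * volume (ball (0 : EuclideanSpace ℝ (Fin N)) 1)) ≠ 0 := by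
    refine mul_ne_zero ?_ (measure_ball_pos volume 0 one_pos).ne'
    exact_mod_cast hN0.ne'
  have hu2int : Integrable (fun y => ‖u y‖ ^ 2) := by
    have h1 := hu2.integrable_norm_rpow (by norm_num) (by norm_num)
    refine h1.congr (ae_of_all _ fun y => ?_)
    show ‖u y‖ ^ ((2:ℝ≥0∞)).toReal = ‖u y‖ ^ (2:ℕ)
    rw [show ((2:ℝ≥0∞)).toReal = ((2:ℕ):ℝ) by simp, Real.rpow_natCast]
  have hd2int : Integrable (fun y => ‖fderiv ℝ u y‖ ^ 2) := by
    have h1 := hd2.integrable_norm_rpow (by norm_num) (by norm_num)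
    refine h1.congr (ae_of_all _ fun y => ?_)
    show ‖‖fderiv ℝ u y‖‖ ^ ((2:ℝ≥0∞)).toReal = ‖fderiv ℝ u y‖ ^ (2:ℕ)
    rw [norm_norm, show ((2:ℝ≥0∞)).toReal = ((2:ℕ):ℝ) by simp, Real.rpow_natCast]
  have hlift : ∀ (w : ℝ → ℝ), Measurable w → (∀ s, 0 ≤ w s) →
      Integrable (fun y : EuclideanSpace ℝ (Fin N) => w ‖y‖) →
      (IntegrableOn (fun s => s ^ (N - 1) * w s) (Ioi 0)
        ∧ ∫ y : EuclideanSpace ℝ (Fin N), w ‖y‖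
            = c * ∫ s in Ioi (0:ℝ), s ^ (N - 1) * w s) := by
    intro w hw_meas hw_nonneg hw_int
    have hlin := lintegral_polar (volume : Measure (EuclideanSpace ℝ (Fin N))) (fun t => ENNReal.ofReal (w t)) hw_meas.ennreal_ofReal
    rw [hdim] at hlin
    have hfin : ∫⁻ y : EuclideanSpace ℝ (Fin N), ENNReal.ofReal (w ‖y‖) < ⊤ :=
      (hasFiniteIntegral_iff_ofReal (ae_of_all _ fun y => hw_nonneg _)).1 hw_int.2
    have hT : ∫⁻ s in Ioi (0:ℝ), ENNReal.ofReal (s ^ (N - 1)) * ENNReal.ofReal (w s) ≠ ⊤ := by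
      intro heq
      rw [hlin, heq, ENNReal.mul_top hcoef_ne_zero] at hfin
      exact (lt_irrefl _ hfin).elim
    have hcongr : ∫⁻ s in Ioi (0:ℝ), ENNReal.ofReal (s ^ (N - 1)) * ENNReal.ofReal (w s)
        = ∫⁻ s in Ioi (0:ℝ), ENNReal.ofReal (s ^ (N - 1) * w s) := by
      refine setLIntegral_congr_fun measurableSet_Ioi (fun s hs => ?_)
      have hs' : (0:ℝ) < s := hs
      rw [ENNReal.ofReal_mul (pow_nonneg hs'.le _)]
    have hint : IntegrableOn (fun s => s ^ (N - 1) * w s) (Ioi 0) := by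
      refine ⟨((measurable_id.pow_const _).mul hw_meas).aestronglyMeasurable.restrict, ?_⟩
      rw [hasFiniteIntegral_iff_ofReal]
      · rw [← hcongr]
        exact lt_top_iff_ne_top.mpr hT
      · refine (ae_restrict_iff' measurableSet_Ioi).2 (ae_of_all _ fun s hs => ?_)
        have hs' : (0:ℝ) < s := hs
        exact mul_nonneg (pow_nonneg hs'.le _) (hw_nonneg s)
    refine ⟨hint, ?_⟩
    have hval := integral_fun_norm_addHaar (volume : Measure (EuclideanSpace ℝ (Fin N))) w
    rw [hdim] at hval
    rw [hval, nsmul_eq_mul, smul_eq_mul, hcdef]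
    simp only [smul_eq_mul, measureReal_def]
    ring
  have hlift₁ := hlift φ hφ_cont.measurable hφ_nonneg
    (by refine hu2int.congr (ae_of_all _ fun y => ?_)
        show ‖u y‖ ^ 2 = φ ‖y‖
        rw [hgx y])
  have hlift₂ := hlift (fun s => (h s) ^ 2) (hh_meas.pow_const 2) (fun s => by positivity)
    (by refine hd2int.congr (ae_of_all _ fun y => ?_)
        show ‖fderiv ℝ u y‖ ^ 2 = (h ‖y‖) ^ 2
        rw [hradD y])
  have hF₁_int : IntegrableOn F₁ (Ioi 0) := hlift₁.1
  have hF₂_int : IntegrableOn F₂ (Ioi 0) := hlift₂.1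
  -- value identities via polar coordinates
  have hval₁ : ∫ y, ‖u y‖ ^ 2 = c * ∫ s in Ioi (0:ℝ), F₁ s := by
    rw [← hlift₁.2]
    refine integral_congr_ae (ae_of_all _ fun y => ?_)
    show ‖u y‖ ^ 2 = φ ‖y‖
    rw [hgx y]
  have hval₂ : ∫ y, ‖fderiv ℝ u y‖ ^ 2 = c * ∫ s in Ioi (0:ℝ), F₂ s := by
    rw [← hlift₂.2]
    refine integral_congr_ae (ae_of_all _ fun y => ?_)
    show ‖fderiv ℝ u y‖ ^ 2 = (h ‖y‖) ^ 2
    rw [hradD y]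
  set J₁ : ℝ := ∫ s in Ioi (0:ℝ), F₁ s with hJ₁_def
  set J₂ : ℝ := ∫ s in Ioi (0:ℝ), F₂ s with hJ₂_def
  have hJ₁_nonneg : 0 ≤ J₁ := setIntegral_nonneg measurableSet_Ioi hF₁_nonneg
  have hJ₂_nonneg : 0 ≤ J₂ := setIntegral_nonneg measurableSet_Ioi hF₂_nonneg
  -- Cauchy-Schwarz bound
  set ψ : ℝ → ℝ := fun s => Real.sqrt (F₁ s) * Real.sqrt (F₂ s) with hψ_def
  have hψ_nonneg : ∀ s, 0 ≤ ψ s := fun s => mul_nonneg (Real.sqrt_nonneg _) (Real.sqrt_nonneg _)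
  have hψ_meas : Measurable ψ := (hF₁_meas.sqrt).mul (hF₂_meas.sqrt)
  have hψ_int : IntegrableOn ψ (Ioi 0) := by
    refine Integrable.mono' ((hF₁_int.add hF₂_int).const_mul (2⁻¹ : ℝ))
      hψ_meas.aestronglyMeasurable.restrict ?_
    refine (ae_restrict_iff' measurableSet_Ioi).2 (ae_of_all _ fun s hs => ?_)
    have h1 : 0 ≤ F₁ s := hF₁_nonneg s hs
    have h2 : 0 ≤ F₂ s := hF₂_nonneg s hs
    rw [Real.norm_of_nonneg (hψ_nonneg s)]
    have hA := Real.sq_sqrt h1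
    have hB := Real.sq_sqrt h2
    have := two_mul_le_add_sq (Real.sqrt (F₁ s)) (Real.sqrt (F₂ s))
    show Real.sqrt (F₁ s) * Real.sqrt (F₂ s) ≤ 2⁻¹ * (F₁ s + F₂ s)
    nlinarith
  have hψ_bound : ∫ s in Ioi (0:ℝ), ψ s ≤ Real.sqrt J₁ * Real.sqrt J₂ := by
    have h22 : Real.HolderConjugate 2 2 := Real.holderConjugate_iff.mpr ⟨one_lt_two, by norm_num⟩
    have hmem : ∀ (F : ℝ → ℝ), Measurable F → (∀ s ∈ Ioi (0:ℝ), 0 ≤ F s) →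
        IntegrableOn F (Ioi 0) →
        MemLp (fun s => Real.sqrt (F s)) (ENNReal.ofReal 2) (volume.restrict (Ioi 0)) := by
      intro F hFm hFnn hFi
      have : ENNReal.ofReal (2:ℝ) = 2 := by norm_num
      rw [this]
      refine (memLp_two_iff_integrable_sq hFm.sqrt.aestronglyMeasurable.restrict).2 ?_
      refine hFi.congr ?_
      refine (ae_restrict_iff' measurableSet_Ioi).2 (ae_of_all _ fun s hs => ?_)
      show F s = Real.sqrt (F s) ^ 2
      rw [Real.sq_sqrt (hFnn s hs)]
    have hH := integral_mul_le_Lp_mul_Lq_of_nonneg h22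
      (μ := volume.restrict (Ioi (0:ℝ)))
      (f := fun s => Real.sqrt (F₁ s)) (g := fun s => Real.sqrt (F₂ s))
      (ae_of_all _ fun s => Real.sqrt_nonneg _) (ae_of_all _ fun s => Real.sqrt_nonneg _)
      (hmem F₁ hF₁_meas hF₁_nonneg hF₁_int) (hmem F₂ hF₂_meas hF₂_nonneg hF₂_int)
    have hrw : ∀ (F : ℝ → ℝ), Measurable F → (∀ s ∈ Ioi (0:ℝ), 0 ≤ F s) →
        ∫ s in Ioi (0:ℝ), (Real.sqrt (F s)) ^ (2:ℝ) = ∫ s in Ioi (0:ℝ), F s := by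
      intro F hFm hFnn
      refine setIntegral_congr_fun measurableSet_Ioi (fun s hs => ?_)
      rw [show ((2:ℝ)) = ((2:ℕ):ℝ) by norm_num, Real.rpow_natCast, Real.sq_sqrt (hFnn s hs)]
    rw [hrw F₁ hF₁_meas hF₁_nonneg, hrw F₂ hF₂_meas hF₂_nonneg] at hH
    calc ∫ s in Ioi (0:ℝ), ψ s ≤ J₁ ^ ((1:ℝ)/2) * J₂ ^ ((1:ℝ)/2) := hH
    _ = Real.sqrt J₁ * Real.sqrt J₂ := by
        rw [Real.sqrt_eq_rpow, Real.sqrt_eq_rpow]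
  -- main 1-D estimate
  have hstep : ∀ r R : ℝ, 0 < r → r ≤ R →
      r ^ (N - 1) * φ r ≤ F₁ R + 2 * ∫ s in Ioi (0:ℝ), ψ s := by
    intro r R hr hrR
    have hIoc_sub : Ioc r R ⊆ Ioi 0 := fun s hs => hr.trans hs.1
    have hF₂_Ioc : IntegrableOn F₂ (Ioc r R) := hF₂_int.mono_set hIoc_sub
    have hF₁_Ioc : IntegrableOn F₁ (Ioc r R) := hF₁_int.mono_set hIoc_sub
    have hφIoc : IntegrableOn φ (Ioc r R) := hφ_cont.integrableOn_Ioc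
    have hrp : (0:ℝ) < r ^ (N - 1) := pow_pos hr _
    have hh2Ioc : IntegrableOn (fun s => (h s) ^ 2) (Ioc r R) := by
      refine Integrable.mono' (hF₂_Ioc.const_mul ((r ^ (N - 1))⁻¹))
        ((hh_meas.pow_const 2).aestronglyMeasurable.restrict) ?_
      refine (ae_restrict_iff' measurableSet_Ioc).2 (ae_of_all _ fun s hs => ?_)
      have h1 : r ^ (N - 1) ≤ s ^ (N - 1) := pow_le_pow_left₀ hr.le hs.1.le _
      rw [Real.norm_of_nonneg (sq_nonneg _)]
      show (h s) ^ 2 ≤ (r ^ (N - 1))⁻¹ * F₂ s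
      have hF₂s : F₂ s = s ^ (N - 1) * (h s) ^ 2 := rfl
      rw [hF₂s, inv_mul_eq_div, le_div_iff₀ hrp]
      nlinarith [mul_nonneg (sub_nonneg.2 h1) (sq_nonneg (h s))]
    have hDIoc : IntegrableOn D (Ioc r R) := by
      refine Integrable.mono' (hφIoc.add hh2Ioc) (hD_meas.aestronglyMeasurable.restrict) ?_
      refine ae_of_all _ fun s => ?_
      rw [Real.norm_eq_abs]
      calc |D s| ≤ 2 * (‖g s‖ * h s) := hD_le s
      _ ≤ φ s + (h s) ^ 2 := by
          have hφs : φ s = ‖g s‖ ^ 2 := rfl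
          rw [hφs]
          nlinarith [two_mul_le_add_sq (‖g s‖) (h s)]
    have hDint : IntervalIntegrable D volume r R :=
      (intervalIntegrable_iff_integrableOn_Ioc_of_le hrR).2 hDIoc
    have hFTC : ∫ s in r..R, D s = φ R - φ r :=
      intervalIntegral.integral_eq_sub_of_hasDerivAt (fun s _ => hφ' s) hDint
    have h1 : φ r ≤ φ R + ∫ s in r..R, |D s| := by
      have habs : |∫ s in r..R, D s| ≤ ∫ s in r..R, |D s| :=
        intervalIntegral.abs_integral_le_integral_abs hrR
      have hneg := neg_abs_le (∫ s in r..R, D s)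
      linarith
    have hsD_int : IntervalIntegrable (fun s => s ^ (N - 1) * |D s|) volume r R := by
      refine (intervalIntegrable_iff_integrableOn_Ioc_of_le hrR).2 ?_
      refine Integrable.mono' (hF₁_Ioc.add hF₂_Ioc)
        (((measurable_id.pow_const _).mul hD_meas.abs).aestronglyMeasurable.restrict) ?_
      refine (ae_restrict_iff' measurableSet_Ioc).2 (ae_of_all _ fun s hs => ?_)
      have hs0 : (0:ℝ) < s := hr.trans hs.1
      have hb : |D s| ≤ φ s + (h s) ^ 2 := by
        calc |D s| ≤ 2 * (‖g s‖ * h s) := hD_le s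
        _ ≤ φ s + (h s) ^ 2 := by
            have hφs : φ s = ‖g s‖ ^ 2 := rfl
            rw [hφs]
            nlinarith [two_mul_le_add_sq (‖g s‖) (h s)]
      rw [Real.norm_of_nonneg (mul_nonneg (pow_nonneg hs0.le _) (abs_nonneg _))]
      show s ^ (N - 1) * |D s| ≤ F₁ s + F₂ s
      have hF₁s : F₁ s = s ^ (N - 1) * φ s := rfl
      have hF₂s : F₂ s = s ^ (N - 1) * (h s) ^ 2 := rfl
      rw [hF₁s, hF₂s]
      have hsp : (0:ℝ) ≤ s ^ (N - 1) := pow_nonneg hs0.le _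
      nlinarith [mul_le_mul_of_nonneg_left hb hsp]
    have h2 : r ^ (N - 1) * ∫ s in r..R, |D s| ≤ ∫ s in r..R, s ^ (N - 1) * |D s| := by
      rw [← intervalIntegral.integral_const_mul]
      refine intervalIntegral.integral_mono_on hrR (hDint.abs.const_mul _) hsD_int fun s hs => ?_
      exact mul_le_mul_of_nonneg_right (pow_le_pow_left₀ hr.le hs.1 _) (abs_nonneg _)
    have hψIoc : IntervalIntegrable (fun s => 2 * ψ s) volume r R := by
      refine (intervalIntegrable_iff_integrableOn_Ioc_of_le hrR).2 ?_
      exact (hψ_int.mono_set hIoc_sub).const_mul 2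
    have h3 : ∫ s in r..R, s ^ (N - 1) * |D s| ≤ ∫ s in r..R, 2 * ψ s := by
      refine intervalIntegral.integral_mono_on hrR hsD_int hψIoc fun s hs => ?_
      have hs0 : (0:ℝ) < s := lt_of_lt_of_le hr hs.1
      have hψeq : ψ s = s ^ (N - 1) * (‖g s‖ * h s) := by
        show Real.sqrt (F₁ s) * Real.sqrt (F₂ s) = _
        have hF₁s : F₁ s = s ^ (N - 1) * ‖g s‖ ^ 2 := rfl
        have hF₂s : F₂ s = s ^ (N - 1) * (h s) ^ 2 := rfl
        rw [hF₁s, hF₂s, Real.sqrt_mul (pow_nonneg hs0.le _),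
          Real.sqrt_mul (pow_nonneg hs0.le _),
          Real.sqrt_sq (norm_nonneg _), Real.sqrt_sq (norm_nonneg _)]
        have hss := Real.mul_self_sqrt (pow_nonneg hs0.le (N-1))
        calc Real.sqrt (s ^ (N-1)) * ‖g s‖ * (Real.sqrt (s ^ (N-1)) * h s)
            = (Real.sqrt (s ^ (N-1)) * Real.sqrt (s ^ (N-1))) * (‖g s‖ * h s) := by ring
        _ = s ^ (N - 1) * (‖g s‖ * h s) := by rw [hss]
      rw [hψeq]
      have : |D s| ≤ 2 * (‖g s‖ * h s) := hD_le s
      have hsp : (0:ℝ) ≤ s ^ (N - 1) := pow_nonneg hs0.le _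
      nlinarith
    have h4 : ∫ s in r..R, 2 * ψ s ≤ 2 * ∫ s in Ioi (0:ℝ), ψ s := by
      rw [intervalIntegral.integral_const_mul]
      refine mul_le_mul_of_nonneg_left ?_ (by norm_num)
      rw [intervalIntegral.integral_of_le hrR]
      refine setIntegral_mono_set hψ_int (ae_of_all _ fun s => hψ_nonneg s)
        (HasSubset.Subset.eventuallyLE hIoc_sub)
    have h5 : r ^ (N - 1) * φ R ≤ R ^ (N - 1) * φ R :=
      mul_le_mul_of_nonneg_right (pow_le_pow_left₀ hr.le hrR _) (hφ_nonneg R)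
    have := mul_le_mul_of_nonneg_left h1 hrp.le
    show r ^ (N - 1) * φ r ≤ R ^ (N - 1) * φ R + 2 * ∫ s in Ioi (0:ℝ), ψ s
    rw [mul_add] at this
    linarith
  have hsmall : ∀ ε : ℝ, 0 < ε → ∀ M : ℝ, 0 < M → ∃ R, M ≤ R ∧ F₁ R < ε := by
    intro ε hε M hM
    by_contra hcon
    push_neg at hcon
    have hbig : ∀ R, M ≤ R → ε ≤ F₁ R := fun R hR => hcon R hR
    set T : ℝ := M + (J₁ + 1) / ε with hT_def
    have hMT : M ≤ T := by
      have h0 : 0 ≤ (J₁ + 1) / ε := div_nonneg (by linarith) hε.le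
      rw [hT_def]
      linarith
    have hsub : Ioc M T ⊆ Ioi 0 := fun s hs => hM.trans hs.1
    have hles : ε * (T - M) ≤ ∫ s in Ioc M T, F₁ s := by
      have hconst : ∫ _ in Ioc M T, ε = ε * (T - M) := by
        rw [setIntegral_const, Real.volume_real_Ioc_of_le (by linarith), smul_eq_mul]
        ring
      rw [← hconst]
      refine setIntegral_mono_on (integrableOn_const ?_)
        (hF₁_int.mono_set hsub) measurableSet_Ioc fun s hs => hbig s hs.1.le
      rw [Real.volume_Ioc]
      exact ENNReal.ofReal_ne_top
    have hle2 : ∫ s in Ioc M T, F₁ s ≤ J₁ :=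
      setIntegral_mono_set hF₁_int
        ((ae_restrict_iff' measurableSet_Ioi).2 (ae_of_all _ hF₁_nonneg))
        (HasSubset.Subset.eventuallyLE hsub)
    have : ε * (T - M) = J₁ + 1 := by
      rw [hT_def]; field_simp; ring
    linarith
  have hmain : ∀ r : ℝ, 0 < r → r ^ (N - 1) * φ r ≤ 2 * (Real.sqrt J₁ * Real.sqrt J₂) := by
    intro r hr
    refine le_of_forall_pos_le_add fun ε hε => ?_
    obtain ⟨R, hR1, hR2⟩ := hsmall ε hε r hr
    calc r ^ (N - 1) * φ r ≤ F₁ R + 2 * ∫ s in Ioi (0:ℝ), ψ s := hstep r R hr hR1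
    _ ≤ ε + 2 * (Real.sqrt J₁ * Real.sqrt J₂) := by
        have := mul_le_mul_of_nonneg_left hψ_bound (by norm_num : (0:ℝ) ≤ 2)
        linarith
    _ = 2 * (Real.sqrt J₁ * Real.sqrt J₂) + ε := by ring
  -- conclusion
  set I₁ : ℝ := ∫ y, ‖u y‖ ^ 2 with hI₁_def
  set I₂ : ℝ := ∫ y, ‖fderiv ℝ u y‖ ^ 2 with hI₂_def
  have hI₁_nonneg : 0 ≤ I₁ := integral_nonneg fun y => sq_nonneg _
  have hI₂_nonneg : 0 ≤ I₂ := integral_nonneg fun y => sq_nonneg _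
  have hsqI₁ : Real.sqrt I₁ = Real.sqrt c * Real.sqrt J₁ := by
    rw [hval₁, ← Real.sqrt_mul hc.le]
  have hsqI₂ : Real.sqrt I₂ = Real.sqrt c * Real.sqrt J₂ := by
    rw [hval₂, ← Real.sqrt_mul hc.le]
  have hNR : (1:ℝ) ≤ (N:ℝ) := by exact_mod_cast hN0
  have hexp_pos : 0 < ((N:ℝ) - 1) / 2 := by
    have : (2:ℝ) ≤ (N:ℝ) := by exact_mod_cast hN
    linarith
  by_cases hx0 : x = 0
  · rw [hx0, norm_zero, Real.zero_rpow hexp_pos.ne', zero_mul]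
    have h1 : 0 ≤ I₁ ^ ((1:ℝ)/4) := Real.rpow_nonneg hI₁_nonneg _
    have h2 : 0 ≤ I₂ ^ ((1:ℝ)/4) := Real.rpow_nonneg hI₂_nonneg _
    positivity
  · have hr : 0 < ‖x‖ := norm_pos_iff.2 hx0
    set r : ℝ := ‖x‖ with hr_def
    have hLHS_nonneg : 0 ≤ r ^ (((N:ℝ) - 1) / 2) * ‖u x‖ :=
      mul_nonneg (Real.rpow_nonneg hr.le _) (norm_nonneg _)
    have hRHS_nonneg : 0 ≤ Real.sqrt (2 / c) * I₁ ^ ((1:ℝ)/4) * I₂ ^ ((1:ℝ)/4) :=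
      mul_nonneg (mul_nonneg (Real.sqrt_nonneg _) (Real.rpow_nonneg hI₁_nonneg _))
        (Real.rpow_nonneg hI₂_nonneg _)
    have hL2 : (r ^ (((N:ℝ) - 1) / 2) * ‖u x‖) ^ 2 = r ^ (N - 1) * φ r := by
      rw [mul_pow]
      congr 1
      · rw [← Real.rpow_natCast (r ^ (((N:ℝ) - 1) / 2)) 2, ← Real.rpow_mul hr.le]
        rw [show (((N:ℝ) - 1) / 2) * ((2:ℕ):ℝ) = ((N - 1 : ℕ) : ℝ) by
          push_cast [Nat.cast_sub hN0]; ring]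
        exact Real.rpow_natCast r (N - 1)
      · rw [hφ_def, hgx x]
    have hR2 : (Real.sqrt (2 / c) * I₁ ^ ((1:ℝ)/4) * I₂ ^ ((1:ℝ)/4)) ^ 2
        = 2 * (Real.sqrt J₁ * Real.sqrt J₂) := by
      have hq : ∀ (I : ℝ), 0 ≤ I → (I ^ ((1:ℝ)/4)) ^ 2 = Real.sqrt I := by
        intro I hI
        rw [← Real.rpow_natCast (I ^ ((1:ℝ)/4)) 2, ← Real.rpow_mul hI]
        rw [show ((1:ℝ)/4) * ((2:ℕ):ℝ) = 1/2 by norm_num]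
        rw [Real.sqrt_eq_rpow]
      rw [mul_pow, mul_pow, Real.sq_sqrt (by positivity : (0:ℝ) ≤ 2 / c),
        hq I₁ hI₁_nonneg, hq I₂ hI₂_nonneg, hsqI₁, hsqI₂]
      have hcc : Real.sqrt c * Real.sqrt c = c := Real.mul_self_sqrt hc.le
      have hrw2 : 2 / c * (Real.sqrt c * Real.sqrt J₁) * (Real.sqrt c * Real.sqrt J₂)
          = (Real.sqrt c * Real.sqrt c) / c * (2 * (Real.sqrt J₁ * Real.sqrt J₂)) := by ring
      rw [hrw2, hcc, div_self hc.ne', one_mul]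
    have hfin : (r ^ (((N:ℝ) - 1) / 2) * ‖u x‖) ^ 2
        ≤ (Real.sqrt (2 / c) * I₁ ^ ((1:ℝ)/4) * I₂ ^ ((1:ℝ)/4)) ^ 2 := by
      rw [hL2, hR2]
      exact hmain r hr
    calc r ^ (((N:ℝ) - 1) / 2) * ‖u x‖
        = Real.sqrt ((r ^ (((N:ℝ) - 1) / 2) * ‖u x‖) ^ 2) := (Real.sqrt_sq hLHS_nonneg).symm
    _ ≤ Real.sqrt ((Real.sqrt (2 / c) * I₁ ^ ((1:ℝ)/4) * I₂ ^ ((1:ℝ)/4)) ^ 2) :=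
        Real.sqrt_le_sqrt hfin
    _ = Real.sqrt (2 / c) * I₁ ^ ((1:ℝ)/4) * I₂ ^ ((1:ℝ)/4) := Real.sqrt_sq hRHS_nonneg
end
end
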